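/- The calculi GwIKt and GwIKt† derive exactly the same sequents: for any sequent Γ ⇒ β, GwIKt ⊢ Γ ⇒ β if and only if GwIKt† ⊢ Γ ⇒ β. -/

import Mathlib

/-- Formulas of weak intuitionistic tense logic. -/
inductive Fml : Type
  | var : ℕ → Fml
  | top : Fml
  | bot : Fml
  | imp : Fml → Fml → Fml
  | and : Fml → Fml → Fml
  | or  : Fml → Fml → Fml
  | dia : Fml → Fml   -- ◇ (future diamond)
  | box : Fml → Fml   -- □ (future box)
  | bdia : Fml → Fml  -- ◆ (past diamond)
  | bbox : Fml → Fml  -- ■ (past box)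

/-- Atomic formulas: variables, ⊤, ⊥. -/
def Fml.Atomic : Fml → Prop
  | .var _ => True
  | .top => True
  | .bot => True
  | _ => False

/-- Formula structures: formulas closed under comma, ∘, •. -/
inductive FS : Type
  | fml : Fml → FS
  | comma : FS → FS → FS
  | circ : FS → FS    -- ∘, structural ◇
  | bullet : FS → FS  -- •, structural ◆

/-- Single-hole contexts. -/
inductive Ctx : Type
  | hole : Ctx
  | commaL : Ctx → FS → Ctx
  | commaR : FS → Ctx → Ctx
  | circ : Ctx → Ctx
  | bullet : Ctx → Ctx

/-- Fill the hole of a context with a structure. -/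
def Ctx.plug : Ctx → FS → FS
  | .hole, Δ => Δ
  | .commaL C Γ, Δ => .comma (C.plug Δ) Γ
  | .commaR Γ C, Δ => .comma Γ (C.plug Δ)
  | .circ C, Δ => .circ (C.plug Δ)
  | .bullet C, Δ => .bullet (C.plug Δ)

/-- Multi-hole contexts (for the mix rules Γ[·]ⁿ). -/
inductive MCtx : Type
  | hole : MCtx
  | fml : Fml → MCtx
  | comma : MCtx → MCtx → MCtx
  | circ : MCtx → MCtx
  | bullet : MCtx → MCtx

/-- Fill all holes of a multi-context with the same structure. -/
def MCtx.plug : MCtx → FS → FS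
  | .hole, Δ => Δ
  | .fml α, _ => .fml α
  | .comma C D, Δ => .comma (C.plug Δ) (D.plug Δ)
  | .circ C, Δ => .circ (C.plug Δ)
  | .bullet C, Δ => .bullet (C.plug Δ)

/-- Number n of designated occurrences in Γ[·]ⁿ. -/
def MCtx.holes : MCtx → ℕ
  | .hole => 1
  | .fml _ => 0
  | .comma C D => C.holes + D.holes
  | .circ C => C.holes
  | .bullet C => C.holes

/-- Cut formulas allowed in (Cut_*): not atomic, not □- or ■-formulas, not implications. -/
def Fml.Starish (α : Fml) : Prop :=
  ¬ α.Atomic ∧ (∀ a, α ≠ .box a) ∧ (∀ a, α ≠ .bbox a) ∧ (∀ a b, α ≠ .imp a b)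

/-- Flags selecting the variant of the calculus:
`idFull`: unrestricted identity axiom (Id) vs atomic (Id_A);
`conF`: full formula contraction (Con_F) vs the restricted contractions
(Con_A), (Con_□), (Con_■), (Con_→);
`cut`: the single cut rule (Cut);
`mix`: the four cut-like rules (Mix_A), (Mix_□), (Mix_■), (Mix_→), (Cut_*). -/
structure Rules where
  idFull : Bool
  conF : Bool
  cut : Bool
  mix : Bool

/-- `DerH R n Γ β`: the sequent Γ ⇒ β has a derivation of height at most `n`
in the calculus determined by `R`. -/
inductive DerH (R : Rules) : ℕ → FS → Fml → Prop
  -- (Id_A)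
  | idA (n : ℕ) (α : Fml) : 1 ≤ n → α.Atomic → DerH R n (.fml α) α
  -- (Id), only in calculi with unrestricted identity
  | idF (n : ℕ) (α : Fml) : R.idFull = true → 1 ≤ n → DerH R n (.fml α) α
  -- (⊤)
  | topL (n : ℕ) (Γ : Ctx) (Δ : FS) (β : Fml) :
      DerH R n (Γ.plug (.fml .top)) β → DerH R (n + 1) (Γ.plug Δ) β
  -- (⊥)
  | botL (n : ℕ) (Γ : Ctx) (Δ : FS) (β : Fml) :
      DerH R n Δ .bot → DerH R (n + 1) (Γ.plug Δ) β
  -- (∧L)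
  | andL (n : ℕ) (Γ : Ctx) (α₁ α₂ β : Fml) :
      DerH R n (Γ.plug (.comma (.fml α₁) (.fml α₂))) β →
      DerH R (n + 1) (Γ.plug (.fml (α₁.and α₂))) β
  -- (∧R)
  | andR (n : ℕ) (Γ : FS) (β₁ β₂ : Fml) :
      DerH R n Γ β₁ → DerH R n Γ β₂ → DerH R (n + 1) Γ (β₁.and β₂)
  -- (∨L)
  | orL (n : ℕ) (Γ : Ctx) (α₁ α₂ β : Fml) :
      DerH R n (Γ.plug (.fml α₁)) β → DerH R n (Γ.plug (.fml α₂)) β →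
      DerH R (n + 1) (Γ.plug (.fml (α₁.or α₂))) β
  -- (∨R), i = 1
  | orR₁ (n : ℕ) (Γ : FS) (β₁ β₂ : Fml) :
      DerH R n Γ β₁ → DerH R (n + 1) Γ (β₁.or β₂)
  -- (∨R), i = 2
  | orR₂ (n : ℕ) (Γ : FS) (β₁ β₂ : Fml) :
      DerH R n Γ β₂ → DerH R (n + 1) Γ (β₁.or β₂)
  -- (→L)
  | impL (n : ℕ) (Γ : Ctx) (Δ : FS) (α₁ α₂ β : Fml) :
      DerH R n Δ α₁ → DerH R n (Γ.plug (.fml α₂)) β →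
      DerH R (n + 1) (Γ.plug (.comma Δ (.fml (α₁.imp α₂)))) β
  -- (→R)
  | impR (n : ℕ) (Γ : FS) (β₁ β₂ : Fml) :
      DerH R n (.comma (.fml β₁) Γ) β₂ → DerH R (n + 1) Γ (β₁.imp β₂)
  -- (◇L)
  | diaL (n : ℕ) (Γ : Ctx) (α β : Fml) :
      DerH R n (Γ.plug (.circ (.fml α))) β → DerH R (n + 1) (Γ.plug (.fml (α.dia))) β
  -- (◇R)
  | diaR (n : ℕ) (Γ : FS) (β : Fml) :
      DerH R n Γ β → DerH R (n + 1) (.circ Γ) (β.dia)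
  -- (◆L)
  | bdiaL (n : ℕ) (Γ : Ctx) (α β : Fml) :
      DerH R n (Γ.plug (.bullet (.fml α))) β → DerH R (n + 1) (Γ.plug (.fml (α.bdia))) β
  -- (◆R)
  | bdiaR (n : ℕ) (Γ : FS) (β : Fml) :
      DerH R n Γ β → DerH R (n + 1) (.bullet Γ) (β.bdia)
  -- (■L)
  | bboxL (n : ℕ) (Γ : Ctx) (α β : Fml) :
      DerH R n (Γ.plug (.fml α)) β → DerH R (n + 1) (Γ.plug (.circ (.fml (α.bbox)))) β
  -- (■R)
  | bboxR (n : ℕ) (Γ : FS) (β : Fml) :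
      DerH R n (.circ Γ) β → DerH R (n + 1) Γ (β.bbox)
  -- (□L)
  | boxL (n : ℕ) (Γ : Ctx) (α β : Fml) :
      DerH R n (Γ.plug (.fml α)) β → DerH R (n + 1) (Γ.plug (.bullet (.fml (α.box)))) β
  -- (□R)
  | boxR (n : ℕ) (Γ : FS) (β : Fml) :
      DerH R n (.bullet Γ) β → DerH R (n + 1) Γ (β.box)
  -- (Con∘)
  | conCirc (n : ℕ) (Γ : Ctx) (Δ₁ Δ₂ : FS) (β : Fml) :
      DerH R n (Γ.plug (.comma (.circ Δ₁) (.circ Δ₂))) β →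
      DerH R (n + 1) (Γ.plug (.circ (.comma Δ₁ Δ₂))) β
  -- (Con•)
  | conBullet (n : ℕ) (Γ : Ctx) (Δ₁ Δ₂ : FS) (β : Fml) :
      DerH R n (Γ.plug (.comma (.bullet Δ₁) (.bullet Δ₂))) β →
      DerH R (n + 1) (Γ.plug (.bullet (.comma Δ₁ Δ₂))) β
  -- (Con_F), only with full contraction
  | conF (n : ℕ) (Γ : Ctx) (α β : Fml) : R.conF = true →
      DerH R n (Γ.plug (.comma (.fml α) (.fml α))) β →
      DerH R (n + 1) (Γ.plug (.fml α)) β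
  -- (Con_A), only in the restricted calculi
  | conA (n : ℕ) (Γ : Ctx) (α β : Fml) : R.conF = false → α.Atomic →
      DerH R n (Γ.plug (.comma (.fml α) (.fml α))) β →
      DerH R (n + 1) (Γ.plug (.fml α)) β
  -- (Con_□)
  | conBox (n : ℕ) (Γ : Ctx) (α β : Fml) : R.conF = false →
      DerH R n (Γ.plug (.comma (.fml α.box) (.fml α.box))) β →
      DerH R (n + 1) (Γ.plug (.fml α.box)) β
  -- (Con_■)
  | conBBox (n : ℕ) (Γ : Ctx) (α β : Fml) : R.conF = false →
      DerH R n (Γ.plug (.comma (.fml α.bbox) (.fml α.bbox))) β →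
      DerH R (n + 1) (Γ.plug (.fml α.bbox)) β
  -- (Con_→)
  | conImp (n : ℕ) (Γ : Ctx) (α₁ α₂ β : Fml) : R.conF = false →
      DerH R n (Γ.plug (.comma (.fml (α₁.imp α₂)) (.fml (α₁.imp α₂)))) β →
      DerH R (n + 1) (Γ.plug (.fml (α₁.imp α₂))) β
  -- (Wk), i = 1
  | wk₁ (n : ℕ) (Γ : Ctx) (Δ₁ Δ₂ : FS) (β : Fml) :
      DerH R n (Γ.plug Δ₁) β → DerH R (n + 1) (Γ.plug (.comma Δ₁ Δ₂)) β
  -- (Wk), i = 2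
  | wk₂ (n : ℕ) (Γ : Ctx) (Δ₁ Δ₂ : FS) (β : Fml) :
      DerH R n (Γ.plug Δ₂) β → DerH R (n + 1) (Γ.plug (.comma Δ₁ Δ₂)) β
  -- (Ex)
  | ex (n : ℕ) (Γ : Ctx) (Δ₁ Δ₂ : FS) (β : Fml) :
      DerH R n (Γ.plug (.comma Δ₁ Δ₂)) β → DerH R (n + 1) (Γ.plug (.comma Δ₂ Δ₁)) β
  -- (Dual∘•)
  | dualCB (n : ℕ) (Γ : Ctx) (Δ₁ Δ₂ : FS) (β : Fml) :
      DerH R n (.comma (.circ Δ₁) Δ₂) .bot →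
      DerH R (n + 1) (Γ.plug (.comma Δ₁ (.bullet Δ₂))) β
  -- (Dual•∘)
  | dualBC (n : ℕ) (Γ : Ctx) (Δ₁ Δ₂ : FS) (β : Fml) :
      DerH R n (.comma (.bullet Δ₁) Δ₂) .bot →
      DerH R (n + 1) (Γ.plug (.comma Δ₁ (.circ Δ₂))) β
  -- (Cut)
  | cut (n : ℕ) (Γ : Ctx) (Δ : FS) (α β : Fml) : R.cut = true →
      DerH R n Δ α → DerH R n (Γ.plug (.fml α)) β → DerH R (n + 1) (Γ.plug Δ) β
  -- (Mix_A)
  | mixA (n : ℕ) (Γ : MCtx) (Δ : FS) (α β : Fml) : R.mix = true →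
      α.Atomic → 1 ≤ Γ.holes →
      DerH R n Δ α → DerH R n (Γ.plug (.fml α)) β → DerH R (n + 1) (Γ.plug Δ) β
  -- (Mix_□)
  | mixBox (n : ℕ) (Γ : MCtx) (Δ : FS) (α β : Fml) : R.mix = true →
      1 ≤ Γ.holes →
      DerH R n Δ α.box → DerH R n (Γ.plug (.fml α.box)) β → DerH R (n + 1) (Γ.plug Δ) β
  -- (Mix_■)
  | mixBBox (n : ℕ) (Γ : MCtx) (Δ : FS) (α β : Fml) : R.mix = true →
      1 ≤ Γ.holes →
      DerH R n Δ α.bbox → DerH R n (Γ.plug (.fml α.bbox)) β → DerH R (n + 1) (Γ.plug Δ) β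
  -- (Mix_→)
  | mixImp (n : ℕ) (Γ : MCtx) (Δ : FS) (α₁ α₂ β : Fml) : R.mix = true →
      1 ≤ Γ.holes →
      DerH R n Δ (α₁.imp α₂) → DerH R n (Γ.plug (.fml (α₁.imp α₂))) β →
      DerH R (n + 1) (Γ.plug Δ) β
  -- (Cut_*)
  | cutStar (n : ℕ) (Γ : Ctx) (Δ : FS) (α β : Fml) : R.mix = true →
      α.Starish →
      DerH R n Δ α → DerH R n (Γ.plug (.fml α)) β → DerH R (n + 1) (Γ.plug Δ) β

/-- Derivability (some height). -/
def Der (R : Rules) (Γ : FS) (β : Fml) : Prop := ∃ n, DerH R n Γ β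

/-- GwIKt: full identity, full contraction, with cut. -/
def GwIKt : Rules := ⟨true, true, true, false⟩
/-- GwIKt without the cut rule. -/
def GwIKtCF : Rules := ⟨true, true, false, false⟩
/-- GwIKt† : atomic identity, restricted contractions, with cut. -/
def GwIKtD : Rules := ⟨false, false, true, false⟩
/-- cut-free GwIKt†. -/
def GwIKtDCF : Rules := ⟨false, false, false, false⟩
/-- GwIKt‡ : cut replaced by the four cut-like rules. -/
def GwIKtDD : Rules := ⟨false, false, false, true⟩

/-! GwIKt† lies inside GwIKt, as its restricted contractions are instances of (Con_F).
Conversely, (Id) is admissible in GwIKt† by induction on the formula, and (Con_F) is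
derivable with cut: from `Γ[α, α] ⇒ β` get `Γ[α ∧ α] ⇒ β` by (∧L) and cut it against
`α ⇒ α ∧ α`, which (∧R) builds from two identities. -/

namespace DerH

variable {R : Rules} {n m : ℕ} {Γ : FS} {β : Fml}

theorem succ (h : DerH R n Γ β) : DerH R (n + 1) Γ β := by
  induction h
  all_goals
    solve_by_elim (maxDepth := 12) [Nat.le_succ_of_le, idA, idF, topL, botL, andL, andR, orL,
      orR₁, orR₂, impL, impR, diaL, diaR, bdiaL, bdiaR, bboxL, bboxR, boxL, boxR, conCirc,
      conBullet, conF, conA, conBox, conBBox, conImp, wk₁, wk₂, ex, dualCB, dualBC, cut, mixA,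
      mixBox, mixBBox, mixImp, cutStar]

theorem mono (h : DerH R n Γ β) (hnm : n ≤ m) : DerH R m Γ β := by
  induction m, hnm using Nat.le_induction with
  | base => exact h
  | succ _ _ ih => exact ih.succ

end DerH

namespace Der

variable {R : Rules}

theorem of_rule₁ {Γ Γ' : FS} {β β' : Fml} (rule : ∀ n, DerH R n Γ β → DerH R (n + 1) Γ' β')
    (h : Der R Γ β) : Der R Γ' β' :=
  let ⟨n, hn⟩ := h
  ⟨n + 1, rule n hn⟩

theorem of_rule₂ {Γ₁ Γ₂ Γ' : FS} {β₁ β₂ β' : Fml}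
    (rule : ∀ n, DerH R n Γ₁ β₁ → DerH R n Γ₂ β₂ → DerH R (n + 1) Γ' β')
    (h₁ : Der R Γ₁ β₁) (h₂ : Der R Γ₂ β₂) : Der R Γ' β' :=
  let ⟨n₁, hn₁⟩ := h₁
  let ⟨n₂, hn₂⟩ := h₂
  ⟨max n₁ n₂ + 1, rule _ (hn₁.mono (le_max_left _ _)) (hn₂.mono (le_max_right _ _))⟩

theorem identity (α : Fml) : Der R (.fml α) α := by
  have atomic (α : Fml) (hα : α.Atomic) : Der R (.fml α) α := ⟨1, .idA 1 α le_rfl hα⟩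
  induction α with
  | var => exact atomic _ trivial
  | top => exact atomic _ trivial
  | bot => exact atomic _ trivial
  | imp α₁ α₂ ih₁ ih₂ =>
    exact of_rule₁ (.impR · _ _ _) (of_rule₂ (.impL · .hole _ _ _ _) ih₁ ih₂)
  | and α₁ α₂ ih₁ ih₂ =>
    refine of_rule₂ (.andR · _ _ _) ?_ ?_
    · exact of_rule₁ (.andL · .hole _ _ _) (of_rule₁ (.wk₁ · .hole _ _ _) ih₁)
    · exact of_rule₁ (.andL · .hole _ _ _) (of_rule₁ (.wk₂ · .hole _ _ _) ih₂)
  | or α₁ α₂ ih₁ ih₂ =>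
    exact of_rule₂ (.orL · .hole _ _ _) (of_rule₁ (.orR₁ · _ _ _) ih₁)
      (of_rule₁ (.orR₂ · _ _ _) ih₂)
  | dia α ih => exact of_rule₁ (.diaL · .hole _ _) (of_rule₁ (.diaR · _ _) ih)
  | bdia α ih => exact of_rule₁ (.bdiaL · .hole _ _) (of_rule₁ (.bdiaR · _ _) ih)
  | box α ih => exact of_rule₁ (.boxR · _ _) (of_rule₁ (.boxL · .hole _ _) ih)
  | bbox α ih => exact of_rule₁ (.bboxR · _ _) (of_rule₁ (.bboxL · .hole _ _) ih)

theorem contract (hcut : R.cut = true) {Γ : Ctx} {α β : Fml}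
    (h : Der R (Γ.plug (.comma (.fml α) (.fml α))) β) : Der R (Γ.plug (.fml α)) β :=
  have hdup : Der R (.fml α) (α.and α) := of_rule₂ (.andR · _ _ _) (identity α) (identity α)
  of_rule₂ (.cut · Γ _ _ _ hcut) hdup (of_rule₁ (.andL · Γ _ _ _) h)

end Der

theorem DerH.GwIKt_of_GwIKtD {n : ℕ} {Γ : FS} {β : Fml} (h : DerH GwIKtD n Γ β) :
    DerH GwIKt n Γ β := by
  induction h
  case idF hR _ | conF hR _ _ | mixA hR _ _ _ _ _ _ | mixBox hR _ _ _ _ _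
    | mixBBox hR _ _ _ _ _ | mixImp hR _ _ _ _ _ | cutStar hR _ _ _ _ _ => cases hR
  all_goals
    solve_by_elim [DerH.idA, DerH.topL, DerH.botL, DerH.andL, DerH.andR, DerH.orL, DerH.orR₁, DerH.orR₂, DerH.impL, DerH.impR, DerH.diaL, DerH.diaR,
      DerH.bdiaL, DerH.bdiaR, DerH.bboxL, DerH.bboxR, DerH.boxL, DerH.boxR, DerH.conCirc,
      DerH.conBullet, DerH.conF, DerH.wk₁, DerH.wk₂, DerH.ex, DerH.dualCB, DerH.dualBC, DerH.cut]

theorem Der.GwIKtD_of_DerH_GwIKt {n : ℕ} {Γ : FS} {β : Fml} (h : DerH GwIKt n Γ β) :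
    Der GwIKtD Γ β := by
  induction h
  case idA | idF => exact Der.identity _
  case conF ih => exact Der.contract rfl ih
  case conA hR _ _ _ | conBox hR _ _ | conBBox hR _ _ | conImp hR _ _ | mixA hR _ _ _ _ _ _
    | mixBox hR _ _ _ _ _ | mixBBox hR _ _ _ _ _ | mixImp hR _ _ _ _ _
    | cutStar hR _ _ _ _ _ => cases hR
  case cut ih₁ ih₂ => exact Der.of_rule₂ (.cut · _ _ _ _ rfl) ih₁ ih₂
  all_goals
    solve_by_elim [Der.of_rule₁, Der.of_rule₂, DerH.topL, DerH.botL, DerH.andL,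
      DerH.andR, DerH.orL, DerH.orR₁, DerH.orR₂, DerH.impL, DerH.impR, DerH.diaL, DerH.diaR,
      DerH.bdiaL, DerH.bdiaR, DerH.bboxL, DerH.bboxR, DerH.boxL, DerH.boxR, DerH.conCirc,
      DerH.conBullet, DerH.wk₁, DerH.wk₂, DerH.ex, DerH.dualCB, DerH.dualBC]

/-- GwIKt and GwIKt† derive exactly the same sequents. -/
theorem stmt7_GwIKt_iff_dagger (Γ : FS) (β : Fml) :
    Der GwIKt Γ β ↔ Der GwIKtD Γ β :=
  ⟨fun ⟨_, h⟩ => Der.GwIKtD_of_DerH_GwIKt h, fun ⟨n, h⟩ => ⟨n, h.GwIKt_of_GwIKtD⟩⟩
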